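/- Let u, v : ℝ → ℝ be twice differentiable with u(0) = 1 and v(0) = 0, and write a = u′(0), m = v′(0). Set H = diag(1,−1) and E = E₁₂. Then the geodesic equation u″(t)·H + v″(t)·E + β(u′(t)·H + v′(t)·E, u′(t)·H + v′(t)·E) = 0 holds for all t ∈ ℝ if and only if u(t) = a·t + 1 and v(t) = m·t for all t. -/

import Mathlib

open Matrix

/-- The Fisher α-connection function
`β(X,Y) = (XY + YX)/2 − (tr(XY)/2)·I` on real 2×2 matrices. -/
noncomputable def fisherBeta2 (X Y : Matrix (Fin 2) (Fin 2) ℝ) :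
    Matrix (Fin 2) (Fin 2) ℝ :=
  (2⁻¹ : ℝ) • (X * Y + Y * X) - ((X * Y).trace / 2) • (1 : Matrix (Fin 2) (Fin 2) ℝ)

/-! The geodesic equation reduces to `u'' = v'' = 0` because `β(X, X) = X² − (tr X² / 2)·I`
vanishes on all of `𝔰𝔩(2,ℝ)`: by Cayley–Hamilton a traceless `2×2` matrix squares to a scalar
matrix. A twice differentiable function with vanishing second derivative is affine. -/

theorem fisherBeta2_self_of_trace_eq_zero {X : Matrix (Fin 2) (Fin 2) ℝ} (hX : X.trace = 0) :
    fisherBeta2 X X = 0 := by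
  have hX11 : X 1 1 = -X 0 0 := by
    rw [trace_fin_two] at hX
    linarith
  ext i j
  fin_cases i <;> fin_cases j <;>
    simp [fisherBeta2, mul_apply, Fin.sum_univ_two, trace_fin_two, hX11] <;> ring

theorem smul_diag_add_smul_single_eq (c d : ℝ) :
    c • !![(1 : ℝ), 0; 0, -1] + d • !![0, 1; 0, 0] = !![c, d; 0, -c] := by
  ext i j
  fin_cases i <;> fin_cases j <;> simp

theorem upperTriangular_traceless_eq_zero_iff (c d : ℝ) :
    !![c, d; 0, -c] = 0 ↔ c = 0 ∧ d = 0 := by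
  simp [← Matrix.ext_iff, Fin.forall_fin_two, and_comm]

theorem deriv_deriv_eq_zero_iff {f : ℝ → ℝ} (hf : Differentiable ℝ f)
    (hf' : Differentiable ℝ (deriv f)) :
    (∀ t, deriv (deriv f) t = 0) ↔ ∀ t, f t = deriv f 0 * t + f 0 := by
  constructor
  · intro h t
    have hconst (s : ℝ) : deriv f s = deriv f 0 := is_const_of_deriv_eq_zero hf' h s 0
    have hsub (s : ℝ) : deriv (fun s => f s - deriv f 0 * s) s = 0 := by
      rw [deriv_fun_sub (hf s) (by fun_prop), hconst s]
      simp
    have := is_const_of_deriv_eq_zero (by fun_prop) hsub t 0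
    simp only [mul_zero, sub_zero] at this
    linarith
  · intro h
    obtain ⟨a, b, rfl⟩ : ∃ a b, f = fun t => a * t + b := ⟨_, _, funext h⟩
    simp

/-- Let `u, v : ℝ → ℝ` be twice differentiable with `u 0 = 1`, `v 0 = 0`, and
set `a = u′(0)`, `m = v′(0)`, `H = diag(1,−1)`, `E = E₁₂`. The geodesic
equation `u″·H + v″·E + β(u′·H + v′·E, u′·H + v′·E) = 0` holds for all `t`
iff `u t = a·t + 1` and `v t = m·t` for all `t`. -/
theorem sl2_geodesic_iff_linear
    (u v : ℝ → ℝ)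
    (hu₁ : Differentiable ℝ u) (hu₂ : Differentiable ℝ (deriv u))
    (hv₁ : Differentiable ℝ v) (hv₂ : Differentiable ℝ (deriv v))
    (hu0 : u 0 = 1) (hv0 : v 0 = 0)
    (a m : ℝ) (ha : a = deriv u 0) (hm : m = deriv v 0)
    (H E : Matrix (Fin 2) (Fin 2) ℝ)
    (hH : H = !![1, 0; 0, -1]) (hE : E = !![0, 1; 0, 0]) :
    (∀ t : ℝ,
        deriv (deriv u) t • H + deriv (deriv v) t • E +
          fisherBeta2 (deriv u t • H + deriv v t • E)
            (deriv u t • H + deriv v t • E) = 0) ↔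
      (∀ t : ℝ, u t = a * t + 1 ∧ v t = m * t) := by
  subst hH hE ha hm
  have hβ (c d : ℝ) : fisherBeta2 !![c, d; 0, -c] !![c, d; 0, -c] = 0 :=
    fisherBeta2_self_of_trace_eq_zero (by simp [trace_fin_two])
  simp only [smul_diag_add_smul_single_eq, hβ, add_zero, upperTriangular_traceless_eq_zero_iff,
    forall_and, deriv_deriv_eq_zero_iff hu₁ hu₂, deriv_deriv_eq_zero_iff hv₁ hv₂, hu0, hv0]
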